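/- Let c_1, …, c_{p} be nonnegative reals and let h_p(x) = x^p/p! - Σ_{k=1}^{p} (c_k/(p-k)!) x^{p-k}. Let r_p be the largest nonnegative real root of h_p. Then h_p(x) = (x - r_p) g_p(x) where g_p is a real polynomial all of whose coefficients are nonnegative. -/

import Mathlib

open Polynomial

/-! The coefficients of `h` are `≤ 0` below degree `p` and positive at `p`. For
`g = h /ₘ (X - C r)`, telescoping `(X - r) g = h` gives `g_j r^(j+1) = -∑_{i ≤ j} h_i r^i`, which is
`≥ 0` for `j < p`, while `g_j = ∑_{i > j} r^(i-j-1) h_i ≥ 0` for `j ≥ p`; this settles `r > 0`.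
If the largest nonnegative root is `r = 0`, then `h > 0` on `(0, ∞)` by the intermediate value
theorem, so the trailing coefficient of `h` is positive: all coefficients below `p` vanish and `g`
has nonnegative coefficients. -/

open Finset in
theorem Polynomial.coeff_mul_pow_succ_eq_neg_sum_mul_X_sub_C {R : Type*} [CommRing R]
    (g : R[X]) (r : R) (j : ℕ) :
    g.coeff j * r ^ (j + 1) = -∑ i ∈ range (j + 1), (g * (X - C r)).coeff i * r ^ i := by
  induction j with
  | zero => simp [mul_sub]
  | succ j ih =>
    rw [sum_range_succ, neg_add, ← ih, coeff_mul_X_sub_C]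
    ring

theorem Polynomial.coeff_divByMonic_X_sub_C_nonneg {R : Type*} [CommRing R] [PartialOrder R]
    [IsOrderedRing R] {f : R[X]} {r : R} (hr : 0 ≤ r) {j : ℕ}
    (hf : ∀ i, j < i → 0 ≤ f.coeff i) : 0 ≤ (f /ₘ (X - C r)).coeff j := by
  rw [coeff_divByMonic_X_sub_C]
  exact Finset.sum_nonneg fun i hi =>
    mul_nonneg (pow_nonneg hr _) (hf i (by simp at hi; omega))

theorem Polynomial.coeff_divByMonic_X_sub_C_nonneg_of_sign_change {R : Type*} [CommRing R]
    [LinearOrder R] [IsStrictOrderedRing R] {f : R[X]} {n : ℕ}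
    (hlow : ∀ i < n, f.coeff i ≤ 0) (hhigh : ∀ i, n ≤ i → 0 ≤ f.coeff i)
    {r : R} (hr : 0 < r) (hroot : f.IsRoot r) (j : ℕ) :
    0 ≤ (f /ₘ (X - C r)).coeff j := by
  rcases lt_or_ge j n with hj | hj
  · refine nonneg_of_mul_nonneg_left ?_ (pow_pos hr (j + 1))
    rw [coeff_mul_pow_succ_eq_neg_sum_mul_X_sub_C, mul_comm, mul_divByMonic_eq_iff_isRoot.2 hroot,
      neg_nonneg]
    exact Finset.sum_nonpos fun i hi =>
      mul_nonpos_of_nonpos_of_nonneg (hlow i (by simp at hi; omega)) (pow_nonneg hr.le i)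
  · exact coeff_divByMonic_X_sub_C_nonneg hr.le fun i hi => hhigh i (by omega)

theorem pos_of_tendsto_atTop_of_ne_zero {g : ℝ → ℝ} (hg : Continuous g)
    (hlim : Filter.Tendsto g Filter.atTop Filter.atTop) (hne : ∀ x, 0 < x → g x ≠ 0)
    {x : ℝ} (hx : 0 < x) : 0 < g x := by
  by_contra! hgx
  obtain ⟨M, hM, hxM⟩ := ((hlim.eventually_ge_atTop 0).and (Filter.eventually_ge_atTop x)).exists
  obtain ⟨y, hy, hgy⟩ := intermediate_value_Icc hxM hg.continuousOn ⟨hgx, hM⟩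
  exact hne y (hx.trans_le hy.1) hgy

theorem Polynomial.trailingCoeff_nonneg_of_eval_nonneg {f : ℝ[X]}
    (hf : ∀ t, 0 < t → 0 ≤ f.eval t) : 0 ≤ f.trailingCoeff := by
  set m := f.natTrailingDegree
  obtain ⟨q, hq⟩ : X ^ m ∣ f := X_pow_dvd_iff.2 fun d hd => coeff_eq_zero_of_lt_natTrailingDegree hd
  have hcoeff : f.trailingCoeff = q.eval 0 := by
    rw [← coeff_zero_eq_eval_zero, ← coeff_X_pow_mul q m 0, zero_add, ← hq]
    rfl
  rw [hcoeff]
  refine ge_of_tendsto ((q.continuous.tendsto 0).mono_left nhdsWithin_le_nhds)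
    (eventually_nhdsWithin_of_forall (s := Set.Ioi 0) fun t (ht : 0 < t) => ?_)
  have := hf t ht
  rw [hq, eval_mul, eval_pow, eval_X] at this
  exact nonneg_of_mul_nonneg_right this (pow_pos ht _)

theorem Polynomial.coeff_nonneg_of_sign_change_of_no_pos_root {f : ℝ[X]} {n : ℕ} (hn : 0 < n)
    (hlow : ∀ i < n, f.coeff i ≤ 0) (hhigh : ∀ i, n ≤ i → 0 ≤ f.coeff i) (hfn : 0 < f.coeff n)
    (hroot : ∀ x, 0 < x → ¬ f.IsRoot x) (i : ℕ) : 0 ≤ f.coeff i := by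
  have hdeg : n ≤ f.natDegree := le_natDegree_of_ne_zero hfn.ne'
  have hf0 : f ≠ 0 := by
    rintro rfl
    simp at hfn
  have hlim : Filter.Tendsto (fun x => f.eval x) Filter.atTop Filter.atTop :=
    f.tendsto_atTop_of_leadingCoeff_nonneg (natDegree_pos_iff_degree_pos.1 (hn.trans_le hdeg))
      (hhigh _ hdeg)
  have htrail : 0 < f.trailingCoeff :=
    (trailingCoeff_nonneg_of_eval_nonneg fun t ht =>
      (pos_of_tendsto_atTop_of_ne_zero f.continuous hlim hroot ht).le).lt_of_ne'
      (trailingCoeff_eq_zero.not.2 hf0)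
  have htrailDeg : n ≤ f.natTrailingDegree := by
    by_contra! h
    exact (hlow _ h).not_gt htrail
  rcases lt_or_ge i n with hi | hi
  · exact (coeff_eq_zero_of_lt_natTrailingDegree (hi.trans_le htrailDeg)).ge
  · exact hhigh i hi

section

variable {p : ℕ} {b : ℕ → ℝ}

open Finset

theorem coeff_sum_Icc_C_mul_X_pow_sub_nonneg (hb : ∀ k, 1 ≤ k → k ≤ p → 0 ≤ b k) (i : ℕ) :
    0 ≤ (∑ k ∈ Icc 1 p, C (b k) * X ^ (p - k)).coeff i := by
  rw [finsetSum_coeff]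
  refine sum_nonneg fun k hk => ?_
  rw [mem_Icc] at hk
  rw [coeff_C_mul_X_pow]
  split_ifs
  exacts [hb k hk.1 hk.2, le_rfl]

theorem coeff_sum_Icc_C_mul_X_pow_sub_eq_zero {i : ℕ} (hi : p ≤ i) :
    (∑ k ∈ Icc 1 p, C (b k) * X ^ (p - k)).coeff i = 0 := by
  rw [finsetSum_coeff]
  refine sum_eq_zero fun k hk => ?_
  rw [mem_Icc] at hk
  rw [coeff_C_mul_X_pow, if_neg (by omega)]

end

theorem stmt1 (p : ℕ) (hp : 1 ≤ p) (c : ℕ → ℝ)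
    (hc : ∀ k, 1 ≤ k → k ≤ p → 0 ≤ c k)
    (h : Polynomial ℝ)
    (hh : h = C (1 / (Nat.factorial p : ℝ)) * X ^ p -
      ∑ k ∈ Finset.Icc 1 p, C (c k / (Nat.factorial (p - k) : ℝ)) * X ^ (p - k))
    (r : ℝ) (hr0 : 0 ≤ r) (hroot : h.eval r = 0)
    (hrmax : ∀ x : ℝ, 0 ≤ x → h.eval x = 0 → x ≤ r) :
    ∃ g : Polynomial ℝ, (∀ i, 0 ≤ g.coeff i) ∧ h = (X - C r) * g := by
  have hb : ∀ k, 1 ≤ k → k ≤ p → 0 ≤ c k / (Nat.factorial (p - k) : ℝ) :=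
    fun k hk1 hkp => div_nonneg (hc k hk1 hkp) (Nat.cast_nonneg _)
  have hcoeff : ∀ i, h.coeff i = (if i = p then 1 / (Nat.factorial p : ℝ) else 0) -
      (∑ k ∈ Finset.Icc 1 p, C (c k / (Nat.factorial (p - k) : ℝ)) * X ^ (p - k)).coeff i := by
    simp [hh]
  have hlow : ∀ i < p, h.coeff i ≤ 0 := fun i hi => by
    rw [hcoeff, if_neg hi.ne, zero_sub, neg_nonpos]
    exact coeff_sum_Icc_C_mul_X_pow_sub_nonneg hb i
  have hhigh : ∀ i, p ≤ i → 0 ≤ h.coeff i := fun i hi => by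
    rw [hcoeff, coeff_sum_Icc_C_mul_X_pow_sub_eq_zero hi, sub_zero]
    split_ifs <;> positivity
  refine ⟨h /ₘ (X - C r), fun i => ?_, (mul_divByMonic_eq_iff_isRoot.2 hroot).symm⟩
  rcases hr0.eq_or_lt with rfl | hr
  · have hp_pos : 0 < h.coeff p := by
      rw [hcoeff, if_pos rfl, coeff_sum_Icc_C_mul_X_pow_sub_eq_zero le_rfl, sub_zero]
      positivity
    have hno_root : ∀ x, 0 < x → ¬ h.IsRoot x := fun x hx hx0 => (hrmax x hx.le hx0).not_gt hx
    exact coeff_divByMonic_X_sub_C_nonneg le_rfl fun j _ =>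
      coeff_nonneg_of_sign_change_of_no_pos_root hp hlow hhigh hp_pos hno_root j
  · exact coeff_divByMonic_X_sub_C_nonneg_of_sign_change hlow hhigh hr hroot i
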